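/- arXiv:1503.00889 — 4 statements merged into one kernel-verified Lean document; each statement's English description precedes it below -/
import Mathlib

section
/- Let $k_0 < 0$, $0 < l \le \pi$, let $D \subset (0,l)$ be a set of full Lebesgue measure, and let $w : D \to \mathbb{R}$ satisfy: (i) $w$ is strictly decreasing on $D$ (if $t_1, t_2 \in D$ with $t_1 < t_2$ then $w(t_1) > w(t_2)$); (ii) for every $t_0 \in D$, $\limsup_{D \ni t \to t_0^+} \frac{w(t)-w(t_0)}{t-t_0} \le -1 - w(t_0)^2$; (iii) $w(t) \le \sqrt{-k_0}\cosh(\sqrt{-k_0}\,t)/\sinh(\sqrt{-k_0}\,t)$ for all $t \in D$. Then $w(t) \le \cot t$ for every $t \in D$. -/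
open Filter MeasureTheory Set Real Topology

/-!
Put `θ t = -arctan (w t)`. The Riccati inequality `w' ≤ -1 - w²` becomes `θ' ≥ 1` along `D`,
and `θ` is monotone on `D`. Extending `θ` to a monotone function on an interval, Lebesgue's
differentiation theorem gives `θ t - θ s ≥ ∫ₛᵗ θ' ≥ t - s` (the gaps of `D` are null, and a
monotone function can only gain across them). Since `θ > -π/2`, letting `s → 0` yields
`arctan (w t) ≤ π/2 - t`, i.e. `w t ≤ cot t` for `0 < t < π`.
-/

-- An unbounded `limsup` in `ℝ` is the junk value `sInf ∅ = 0`.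
theorem Real.isBoundedUnder_le_of_limsup_ne_zero {α : Type*} {u : α → ℝ} {f : Filter α}
    (h : limsup u f ≠ 0) : f.IsBoundedUnder (· ≤ ·) u := by
  by_contra hb
  refine h ?_
  rw [limsup_eq, ← Real.sInf_empty]
  congr 1
  exact eq_empty_of_forall_notMem fun a ha => hb ⟨a, ha⟩

theorem nhdsGT_inf_principal_neBot_of_volume_diff {D : Set ℝ} {a b x : ℝ}
    (hfull : volume (Ioo a b \ D) = 0) (hx : x ∈ Ico a b) : (𝓝[>] x ⊓ 𝓟 D).NeBot := by
  refine inf_principal_neBot_iff.2 fun U hU => ?_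
  obtain ⟨c, hxc, hcU⟩ := mem_nhdsGT_iff_exists_Ioo_subset.1 hU
  by_contra hempty
  have hsub : Ioo x (min c b) ⊆ Ioo a b \ D := fun y hy =>
    ⟨⟨hx.1.trans_lt hy.1, hy.2.trans_le (min_le_right _ _)⟩,
      fun hyD => hempty ⟨y, hcU ⟨hy.1, hy.2.trans_le (min_le_left _ _)⟩, hyD⟩⟩
  have hnull := measure_mono_null hsub hfull
  rw [Real.volume_Ioo, ENNReal.ofReal_eq_zero] at hnull
  linarith [lt_min hxc hx.2]

theorem eventually_slope_comp_le {f g : ℝ → ℝ} {x f' c d : ℝ} {l : Filter ℝ}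
    (hl : l ≤ 𝓝[>] x) (hf : Monotone f) (hf' : HasDerivAt f f' (g x))
    (hg : ∀ᶠ y in l, slope g x y ≤ c) (hd : f' * c < d) :
    ∀ᶠ y in l, slope (f ∘ g) x y ≤ d := by
  let a : ℝ → ℝ := fun y => g x + c * (y - x)
  have ha : HasDerivAt (f ∘ a) (f' * c) x := by
    have hlin : HasDerivAt a c x := by
      simpa only [id, mul_one] using ((hasDerivAt_id x).sub_const x).const_mul c |>.const_add (g x)
    exact (by simpa [a] using hf' : HasDerivAt f f' (a x)).comp x hlin
  have hlt : ∀ᶠ y in 𝓝[>] x, slope (f ∘ a) x y < d :=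
    ((hasDerivAt_iff_tendsto_slope.1 ha).mono_left (nhdsGT_le_nhdsNE x)).eventually
      (gt_mem_nhds hd)
  filter_upwards [hg, hl hlt, hl self_mem_nhdsWithin] with y hgy hay hxy
  have hpos : 0 < y - x := sub_pos.2 hxy
  have hgy' : g y ≤ a y := by
    rw [slope_def_field, div_le_iff₀ hpos] at hgy
    simp only [a]; linarith
  calc slope (f ∘ g) x y ≤ slope (f ∘ a) x y := by
        rw [slope_def_field, slope_def_field]
        gcongr
        · exact hf hgy'
        · simp [a]
    _ ≤ d := hay.le

theorem MonotoneOn.mul_sub_le_sub_of_forall_slope {h : ℝ → ℝ} {D : Set ℝ} {K a b : ℝ}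
    (hmono : MonotoneOn h D) (hfull : volume (Ioo a b \ D) = 0) (ha : a ∈ D) (hb : b ∈ D)
    (hab : a ≤ b)
    (hslope : ∀ x ∈ D ∩ Ioo a b, ∀ c < K, ∀ᶠ y in 𝓝[>] x ⊓ 𝓟 D, c ≤ slope h x y) :
    K * (b - a) ≤ h b - h a := by
  have haI : a ∈ D ∩ Icc a b := ⟨ha, left_mem_Icc.2 hab⟩
  have hbI : b ∈ D ∩ Icc a b := ⟨hb, right_mem_Icc.2 hab⟩
  obtain ⟨g, hg, hgh⟩ : ∃ g : ℝ → ℝ, Monotone g ∧ EqOn h g (D ∩ Icc a b) :=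
    (hmono.mono inter_subset_left).exists_monotone_extension
      ⟨h a, forall_mem_image.2 fun y hy => hmono ha hy.1 hy.2.1⟩
      ⟨h b, forall_mem_image.2 fun y hy => hmono hy.1 hb hy.2.2⟩
  have hderiv : ∀ x ∈ D ∩ Ioo a b, DifferentiableAt ℝ g x → K ≤ deriv g x := by
    rintro x hx hdiff
    have := nhdsGT_inf_principal_neBot_of_volume_diff hfull (Ioo_subset_Ico_self hx.2)
    have hlim : Tendsto (slope g x) (𝓝[>] x ⊓ 𝓟 D) (𝓝 (deriv g x)) :=
      ((hasDerivAt_iff_tendsto_slope.1 hdiff.hasDerivAt).mono_left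
        (nhdsGT_le_nhdsNE x)).mono_left inf_le_left
    have hnear : ∀ᶠ y in 𝓝[>] x ⊓ 𝓟 D, y ∈ D ∩ Icc a b := by
      have hb' : ∀ᶠ y in 𝓝[>] x, y ∈ Ioo x b := Ioo_mem_nhdsGT hx.2.2
      filter_upwards [inf_le_left (α := Filter ℝ) hb', mem_inf_of_right (mem_principal_self D)]
        with y hy hyD
      exact ⟨hyD, hx.2.1.le.trans hy.1.le, hy.2.le⟩
    refine le_of_forall_lt_imp_le_of_dense fun c hc => ge_of_tendsto hlim ?_
    filter_upwards [hslope x hx c hc, hnear] with y hy hyD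
    rw [slope_def_field] at hy ⊢
    rwa [← hgh hyD, ← hgh ⟨hx.1, Ioo_subset_Icc_self hx.2⟩]
  have hae : ∀ᵐ x ∂volume.restrict (Icc a b), K ≤ deriv g x := by
    rw [Measure.restrict_congr_set Ioo_ae_eq_Icc.symm, ae_restrict_iff' measurableSet_Ioo]
    filter_upwards [hg.ae_differentiableAt, measure_eq_zero_iff_ae_notMem.1 hfull]
      with x hdiff hxD hx
    exact hderiv x ⟨by_contra fun h => hxD ⟨hx, h⟩, hx⟩ hdiff
  have hgI : MonotoneOn g (uIcc a b) := hg.monotoneOn _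
  calc K * (b - a) = ∫ _ in a..b, K := by simp [mul_comm]
    _ ≤ ∫ x in a..b, deriv g x :=
      intervalIntegral.integral_mono_ae_restrict hab intervalIntegrable_const
        hgI.intervalIntegrable_deriv hae
    _ ≤ g b - g a := by
      have := hgI.intervalIntegral_deriv_mem_uIcc
      rw [uIcc_of_le (sub_nonneg.2 (hg hab))] at this
      exact this.2
    _ = h b - h a := by rw [hgh haI, hgh hbI]

theorem eventually_le_slope_neg_arctan_of_limsup_le {w : ℝ → ℝ} {x c : ℝ} {l : Filter ℝ}
    (hl : l ≤ 𝓝[>] x) (hw : limsup (slope w x) l ≤ -1 - w x ^ 2) (hc : c < 1) :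
    ∀ᶠ y in l, c ≤ slope (fun t => -arctan (w t)) x y := by
  have hpos : 0 < 1 + w x ^ 2 := by positivity
  obtain ⟨d, hwd, hdc⟩ : ∃ d, -1 - w x ^ 2 < d ∧ d < -c * (1 + w x ^ 2) :=
    exists_between (by nlinarith)
  have hbdd := Real.isBoundedUnder_le_of_limsup_ne_zero (by nlinarith : limsup (slope w x) l ≠ 0)
  have hslope : ∀ᶠ y in l, slope w x y ≤ d :=
    (eventually_lt_of_limsup_lt (hw.trans_lt hwd) hbdd).mono fun _ hy => hy.le
  have hd : 1 / (1 + w x ^ 2) * d < -c := by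
    rw [one_div_mul_eq_div, div_lt_iff₀ hpos]
    exact hdc
  filter_upwards [eventually_slope_comp_le hl arctan_strictMono.monotone
    (hasDerivAt_arctan (w x)) hslope hd] with y hy
  rw [slope_neg]
  exact le_neg_of_le_neg hy

theorem Real.le_cot_iff_arctan_le {x t : ℝ} (ht0 : 0 < t) (htπ : t < π) :
    x ≤ cot t ↔ arctan x ≤ π / 2 - t := by
  have hcot : cot t = tan (π / 2 - t) := by
    rw [tan_pi_div_two_sub, tan_eq_sin_div_cos, inv_div, cot_eq_cos_div_sin]
  rw [hcot, ← arctan_le_arctan_iff, arctan_tan (by linarith) (by linarith)]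

theorem stmt0_general (l : ℝ) (hl2 : l ≤ Real.pi)
    (D : Set ℝ) (hD : D ⊆ Set.Ioo 0 l)
    (hfull : volume (Set.Ioo 0 l \ D) = 0)
    (w : ℝ → ℝ)
    (hdec : ∀ t1 ∈ D, ∀ t2 ∈ D, t1 < t2 → w t2 < w t1)
    (hlimsup : ∀ t0 ∈ D,
      Filter.limsup (fun t => (w t - w t0) / (t - t0)) ((𝓝[>] t0) ⊓ 𝓟 D)
        ≤ -1 - (w t0) ^ 2) :
    ∀ t ∈ D, w t ≤ Real.cot t := by
  have hmono : MonotoneOn (fun t => -arctan (w t)) D := fun s hs t ht hst =>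
    neg_le_neg (arctan_strictMono.monotone (StrictAntiOn.antitoneOn hdec hs ht hst))
  intro t ht
  obtain ⟨ht0, htl⟩ := hD ht
  have hgrowth : ∀ s ∈ D, s < t → t - s ≤ arctan (w s) - arctan (w t) := fun s hs hst => by
    have key := hmono.mul_sub_le_sub_of_forall_slope
      (measure_mono_null (sdiff_subset_sdiff_left (Ioo_subset_Ioo (hD hs).1.le htl.le)) hfull)
      hs ht hst.le fun x hx _ hc => eventually_le_slope_neg_arctan_of_limsup_le inf_le_left
        (by rw [slope_fun_def_field]; exact hlimsup x hx.1) hc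
    rwa [one_mul, neg_sub_neg] at key
  have := nhdsGT_inf_principal_neBot_of_volume_diff hfull ⟨le_rfl, ht0.trans htl⟩
  have hlim : Tendsto (fun s => t - s) (𝓝[>] 0 ⊓ 𝓟 D) (𝓝 t) := by
    simpa using ((continuous_sub_left t).tendsto 0).mono_left (inf_le_left.trans nhdsWithin_le_nhds)
  have hθt : t ≤ π / 2 - arctan (w t) := by
    refine le_of_tendsto hlim ?_
    filter_upwards [inf_le_left (α := Filter ℝ) (Ioo_mem_nhdsGT ht0),
      mem_inf_of_right (mem_principal_self D)] with s hs hsD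
    linarith [hgrowth s hsD hs.2, arctan_lt_pi_div_two (w s)]
  exact (Real.le_cot_iff_arctan_le ht0 (htl.trans_le hl2)).2 (by linarith)

theorem stmt0 (k0 l : ℝ) (hk0 : k0 < 0) (hl1 : 0 < l) (hl2 : l ≤ Real.pi)
    (D : Set ℝ) (hD : D ⊆ Set.Ioo 0 l)
    (hfull : volume (Set.Ioo 0 l \ D) = 0)
    (w : ℝ → ℝ)
    (hdec : ∀ t1 ∈ D, ∀ t2 ∈ D, t1 < t2 → w t2 < w t1)
    (hlimsup : ∀ t0 ∈ D,
      Filter.limsup (fun t => (w t - w t0) / (t - t0)) ((𝓝[>] t0) ⊓ 𝓟 D)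
        ≤ -1 - (w t0) ^ 2)
    (hbar : ∀ t ∈ D,
      w t ≤ Real.sqrt (-k0) * Real.cosh (Real.sqrt (-k0) * t) / Real.sinh (Real.sqrt (-k0) * t)) :
    ∀ t ∈ D, w t ≤ Real.cot t :=
  stmt0_general l hl2 D hD hfull w hdec hlimsup
end

section
/- Let $w : D \to \mathbb{R}$ be a decreasing function on a full measure subset $D \subset (0,l)$ satisfying $\limsup_{D \ni t \to t_0^+}\frac{w(t)-w(t_0)}{t-t_0} \le -1 - w(t_0)^2$ for all $t_0 \in D$. Then for any $t_0, \bar t \in D$ with $t_0 < \bar t$ at which $w$ is differentiable (as a function on $D$), one has $\arctan w(\bar t) - \arctan w(t_0) \le -(\bar t - t_0)$. -/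
/-!
Extend `arctan ∘ w` from `D` to an antitone function `F` on `ℝ`. At almost every point `t` of
`(t₀, t̄)` the function `F` is differentiable and `t ∈ D`; there `w = tan ∘ F` along `D`, so by the
chain rule the right difference quotients of `w` along `D` converge to `(1 + w t ^ 2) F'(t)`, and
the Riccati inequality forces `F'(t) ≤ -1`. For a monotone function the increment dominates the
integral of the derivative, which gives `F t̄ - F t₀ ≤ -(t̄ - t₀)`.
-/

open Filter MeasureTheory Set Real Topology

theorem nhdsGT_inf_principal_neBot_of_ae_le {μ : Measure ℝ} [μ.IsOpenPosMeasure] {s D : Set ℝ}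
    (hs : IsOpen s) (hsD : s ≤ᵐ[μ] D) {t : ℝ} (ht : t ∈ s) : (𝓝[>] t ⊓ 𝓟 D).NeBot := by
  refine inf_principal_neBot_iff.mpr fun U hU => ?_
  obtain ⟨u, htu, hsub⟩ := mem_nhdsGT_iff_exists_Ioo_subset.mp
    (inter_mem hU (mem_nhdsWithin_of_mem_nhds (hs.mem_nhds ht)))
  have hle : μ (Ioo t u) ≤ μ (Ioo t u ∩ D) :=
    measure_mono_ae <| by
      filter_upwards [hsD] with x hx hxI
      exact ⟨hxI, hx (hsub hxI).2⟩
  have hpos : μ (Ioo t u) ≠ 0 := (isOpen_Ioo.measure_pos μ (nonempty_Ioo.mpr htu)).ne'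
  obtain ⟨x, hxI, hxD⟩ := nonempty_of_measure_ne_zero (ne_bot_of_le_ne_bot hpos hle)
  exact ⟨x, (hsub hxI).1, hxD⟩

theorem AntitoneOn.sub_le_mul_sub_of_deriv_le {f : ℝ → ℝ} {a b c : ℝ}
    (hf : AntitoneOn f (Icc a b)) (hab : a ≤ b) (hderiv : ∀ᵐ x, x ∈ Ioo a b → deriv f x ≤ c) :
    f b - f a ≤ c * (b - a) := by
  have hneg : MonotoneOn (-f) (uIcc a b) := by rw [uIcc_of_le hab]; exact hf.neg
  have hint : IntervalIntegrable (deriv f) volume a b := by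
    simpa [deriv.neg', Pi.neg_def] using hneg.intervalIntegrable_deriv.neg
  have hincr : f b - f a ≤ ∫ x in a..b, deriv f x := by
    have hba : f b ≤ f a := hf ⟨le_rfl, hab⟩ ⟨hab, le_rfl⟩ hab
    have := hneg.intervalIntegral_deriv_mem_uIcc
    rw [uIcc_of_le (by simpa using hba), deriv.neg', intervalIntegral.integral_neg] at this
    simp only [Pi.neg_apply] at this
    linarith [this.2]
  calc f b - f a ≤ ∫ x in a..b, deriv f x := hincr
    _ ≤ ∫ _ in a..b, c := by
      refine intervalIntegral.integral_mono_ae_restrict hab hint intervalIntegrable_const ?_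
      rw [EventuallyLE, ← restrict_Ioo_eq_restrict_Icc, ae_restrict_iff' measurableSet_Ioo]
      exact hderiv
    _ = c * (b - a) := by simp [mul_comm]

theorem HasDerivAt.tendsto_slope_inf_principal {f g : ℝ → ℝ} {D : Set ℝ} {t d : ℝ}
    (hg : HasDerivAt g d t) (hfg : EqOn f g D) (ht : t ∈ D) :
    Tendsto (fun s => (f s - f t) / (s - t)) (𝓝[>] t ⊓ 𝓟 D) (𝓝 d) := by
  have hle : 𝓝[>] t ⊓ 𝓟 D ≤ 𝓝[≠] t :=
    inf_le_left.trans (nhdsWithin_mono t fun _ hs => ne_of_gt hs)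
  refine ((hasDerivAt_iff_tendsto_slope.mp hg).mono_left hle).congr' ?_
  filter_upwards [mem_inf_of_right (mem_principal_self D)] with s hs
  rw [slope_def_field, hfg hs, hfg ht]

theorem deriv_le_neg_one_of_limsup_slope_le {w F : ℝ → ℝ} {D : Set ℝ} {t d : ℝ}
    (hF : EqOn (fun s => arctan (w s)) F D) (ht : t ∈ D) (hd : HasDerivAt F d t)
    [(𝓝[>] t ⊓ 𝓟 D).NeBot]
    (hlimsup : limsup (fun s => (w s - w t) / (s - t)) (𝓝[>] t ⊓ 𝓟 D) ≤ -1 - w t ^ 2) :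
    d ≤ -1 := by
  have htan : HasDerivAt tan (1 + w t ^ 2) (F t) := by
    rw [← hF ht]
    simpa [cos_sq_arctan] using hasDerivAt_tan (cos_arctan_pos (w t)).ne'
  have hw : EqOn w (tan ∘ F) D := fun s hs => by simp [← hF hs, tan_arctan]
  have hslope := (htan.comp t hd).tendsto_slope_inf_principal hw ht
  rw [hslope.limsup_eq] at hlimsup
  have hpos : 0 < 1 + w t ^ 2 := by positivity
  nlinarith

theorem stmt1_general (l : ℝ)
    (D : Set ℝ) (hD : D ⊆ Set.Ioo 0 l)
    (hfull : volume (Set.Ioo 0 l \ D) = 0)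
    (w : ℝ → ℝ)
    (hdec : ∀ t1 ∈ D, ∀ t2 ∈ D, t1 < t2 → w t2 < w t1)
    (hlimsup : ∀ t0 ∈ D,
      Filter.limsup (fun t => (w t - w t0) / (t - t0)) ((𝓝[>] t0) ⊓ 𝓟 D)
        ≤ -1 - (w t0) ^ 2)
    (t0 tb : ℝ) (ht0 : t0 ∈ D) (htb : tb ∈ D) (hlt : t0 < tb) :
    Real.arctan (w tb) - Real.arctan (w t0) ≤ -(tb - t0) := by
  have hanti : AntitoneOn (fun t => arctan (w t)) D :=
    (arctan_strictMono.comp_strictAntiOn (hdec : StrictAntiOn w D)).antitoneOn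
  obtain ⟨F, hF, hFeq⟩ := hanti.exists_antitone_extension
    ⟨-(π / 2), forall_mem_image.mpr fun _ _ => (neg_pi_div_two_lt_arctan _).le⟩
    ⟨π / 2, forall_mem_image.mpr fun _ _ => (arctan_lt_pi_div_two _).le⟩
  have hae : Ioo 0 l ≤ᵐ[volume] D := ae_le_set.mpr hfull
  have hderiv : ∀ᵐ x, x ∈ Ioo t0 tb → deriv F x ≤ -1 := by
    filter_upwards [hae, hF.neg.ae_differentiableAt] with x hxD hdiff hx
    have hxl : x ∈ Ioo 0 l := ⟨(hD ht0).1.trans hx.1, hx.2.trans (hD htb).2⟩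
    have := nhdsGT_inf_principal_neBot_of_ae_le isOpen_Ioo hae hxl
    exact deriv_le_neg_one_of_limsup_slope_le hFeq (hxD hxl)
      (by simpa using hdiff.neg : DifferentiableAt ℝ F x).hasDerivAt (hlimsup x (hxD hxl))
  have hincr := (hF.antitoneOn (Icc t0 tb)).sub_le_mul_sub_of_deriv_le hlt.le hderiv
  rw [← hFeq ht0, ← hFeq htb] at hincr
  linarith

theorem stmt1 (l : ℝ) (hl : 0 < l)
    (D : Set ℝ) (hD : D ⊆ Set.Ioo 0 l)
    (hfull : volume (Set.Ioo 0 l \ D) = 0)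
    (w : ℝ → ℝ)
    (hdec : ∀ t1 ∈ D, ∀ t2 ∈ D, t1 < t2 → w t2 < w t1)
    (hlimsup : ∀ t0 ∈ D,
      Filter.limsup (fun t => (w t - w t0) / (t - t0)) ((𝓝[>] t0) ⊓ 𝓟 D)
        ≤ -1 - (w t0) ^ 2)
    (t0 tb : ℝ) (ht0 : t0 ∈ D) (htb : tb ∈ D) (hlt : t0 < tb)
    (hdiff0 : ∃ d : ℝ, Filter.Tendsto (fun t => (w t - w t0) / (t - t0))
      ((𝓝[≠] t0) ⊓ 𝓟 D) (𝓝 d))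
    (hdiffb : ∃ d : ℝ, Filter.Tendsto (fun t => (w t - w tb) / (t - tb))
      ((𝓝[≠] tb) ⊓ 𝓟 D) (𝓝 d)) :
    Real.arctan (w tb) - Real.arctan (w t0) ≤ -(tb - t0) :=
  stmt1_general l D hD hfull w hdec hlimsup t0 tb ht0 htb hlt
end

section
/- Let $r < L$ with $0 < L - r \le l_0 < \pi$, let $u : [r,L] \to \mathbb{R}$ be differentiable with Lipschitz derivative, and let $h_u(s) := u(r)\cos(s-r) + \frac{u(L) - u(r)\cos(L-r)}{\sin(L-r)}\sin(s-r)$ be the unique solution of $y'' = -y$ with $y(r) = u(r)$, $y(L) = u(L)$. Then $\int_r^L (u(s) - h_u(s))^2\, ds \le \frac{1}{[(\pi/l_0)^2 - 1]^2} \int_r^L (u''(s) + u(s))^2\, ds$, where $u''$ is the a.e. derivative of $u'$. -/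
/-!
Put `h := u - h_u`, so that `h` vanishes at both ends and `h'' + h = u'' + u =: g` almost
everywhere. Integrating by parts, `∫ h'² = -∫ h h'' = ∫ h² - ∫ h g`, while Wirtinger's inequality
gives `∫ h'² ≥ (π / (L - r))² ∫ h² ≥ (π / l₀)² ∫ h²`. Hence `((π / l₀)² - 1) ∫ h² ≤ -∫ h g`, and
Cauchy–Schwarz bounds the right side by `(∫ h²)^{1/2} (∫ g²)^{1/2}`.

Wirtinger's inequality is proved by completing the square along a solution `q = ω cot(ω s + δ)`
of the Riccati equation `q' = -(ω² + q²)`, which exists on `[a, b]` whenever `ω (b - a) < π`;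
the sharp constant is the limit `ω → π / (b - a)`.
-/

open Filter Set Real Topology intervalIntegral

open MeasureTheory

theorem integral_mul_sq_le_integral_sq_mul_integral_sq {α : Type*} [MeasurableSpace α]
    {μ : Measure α} {f g : α → ℝ} (hf : Integrable (fun x => f x ^ 2) μ)
    (hg : Integrable (fun x => g x ^ 2) μ) (hfg : Integrable (fun x => f x * g x) μ) :
    (∫ x, f x * g x ∂μ) ^ 2 ≤ (∫ x, f x ^ 2 ∂μ) * ∫ x, g x ^ 2 ∂μ := by
  have hquad : ∀ t : ℝ, 0 ≤ (∫ x, f x ^ 2 ∂μ) * (t * t) + 2 * (∫ x, f x * g x ∂μ) * t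
      + ∫ x, g x ^ 2 ∂μ := by
    intro t
    have hexp : ∫ x, (t * f x + g x) ^ 2 ∂μ = (∫ x, f x ^ 2 ∂μ) * (t * t)
        + 2 * (∫ x, f x * g x ∂μ) * t + ∫ x, g x ^ 2 ∂μ := by
      have e : (fun x => (t * f x + g x) ^ 2)
          = fun x => t ^ 2 * f x ^ 2 + 2 * t * (f x * g x) + g x ^ 2 := by ext x; ring
      rw [e, MeasureTheory.integral_add ((hf.const_mul _).fun_add (hfg.const_mul _)) hg,
        MeasureTheory.integral_add (hf.const_mul _) (hfg.const_mul _),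
        MeasureTheory.integral_const_mul, MeasureTheory.integral_const_mul]
      ring
    exact hexp ▸ MeasureTheory.integral_nonneg fun x => sq_nonneg _
  have := discrim_le_zero hquad
  rw [discrim] at this
  linarith

theorem sq_mul_integral_sq_le_of_riccati {f f' q : ℝ → ℝ} {a b ω : ℝ} (hab : a ≤ b)
    (hf : ∀ x ∈ Icc a b, HasDerivAt f (f' x) x) (hf' : ContinuousOn f' (Icc a b))
    (hq : ∀ x ∈ Icc a b, HasDerivAt q (-(ω ^ 2 + q x ^ 2)) x) (ha : f a = 0) (hb : f b = 0) :
    ω ^ 2 * ∫ x in a..b, f x ^ 2 ≤ ∫ x in a..b, f' x ^ 2 := by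
  rw [← uIcc_of_le hab] at hf hf' hq
  have hfc : ContinuousOn f (uIcc a b) := fun x hx => (hf x hx).continuousAt.continuousWithinAt
  have hqc : ContinuousOn q (uIcc a b) := fun x hx => (hq x hx).continuousAt.continuousWithinAt
  set F' : ℝ → ℝ := fun x => 2 * f x * f' x * q x - f x ^ 2 * (ω ^ 2 + q x ^ 2)
  have hF : ∀ x ∈ uIcc a b, HasDerivAt (fun x => f x ^ 2 * q x) (F' x) x := fun x hx =>
    (((hf x hx).pow 2).mul (hq x hx)).congr_deriv (by simp only [F', Pi.pow_apply]; ring)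
  have hF' : IntervalIntegrable F' volume a b := by
    refine ContinuousOn.intervalIntegrable ?_
    simp only [F']
    fun_prop
  have hF'_zero : ∫ x in a..b, F' x = 0 := by
    rw [integral_eq_sub_of_hasDerivAt hF hF']
    simp [ha, hb]
  -- `(f' - q f)² = f'² - ω² f² - (f² q)'`: completing the square along the Riccati solution `q`
  have hsq : ∫ x in a..b, (f' x - q x * f x) ^ 2
      = (∫ x in a..b, f' x ^ 2) - ω ^ 2 * ∫ x in a..b, f x ^ 2 := by
    have e : (fun x => (f' x - q x * f x) ^ 2)
        = fun x => f' x ^ 2 - ω ^ 2 * f x ^ 2 - F' x := by ext x; simp only [F']; ring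
    rw [e, intervalIntegral.integral_sub _ hF', hF'_zero, sub_zero, intervalIntegral.integral_sub,
      intervalIntegral.integral_const_mul]
    all_goals exact ContinuousOn.intervalIntegrable (by fun_prop)
  have hnn : 0 ≤ ∫ x in a..b, (f' x - q x * f x) ^ 2 :=
    intervalIntegral.integral_nonneg hab fun x _ => sq_nonneg _
  linarith

theorem exists_riccati_solution_Icc {a b ω : ℝ} (hω : 0 < ω) (hωab : ω * (b - a) < π) :
    ∃ q : ℝ → ℝ, ∀ x ∈ Icc a b, HasDerivAt q (-(ω ^ 2 + q x ^ 2)) x := by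
  -- `q = ω cot θ`, where `δ` keeps `θ` inside `(0, π)` on `[a, b]`
  set δ := (π - ω * (b - a)) / 2
  set θ : ℝ → ℝ := fun x => ω * (x - a) + δ
  have hθ : ∀ x, HasDerivAt θ ω x := fun x =>
    ((((hasDerivAt_id x).sub_const a).const_mul ω).add_const δ).congr_deriv (mul_one ω)
  refine ⟨fun x => ω * cos (θ x) / sin (θ x), fun x hx => ?_⟩
  have hsin : sin (θ x) ≠ 0 := by
    refine (sin_pos_of_pos_of_lt_pi ?_ ?_).ne'
    · have : 0 ≤ ω * (x - a) := mul_nonneg hω.le (by linarith [hx.1])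
      simp only [θ, δ]
      linarith
    · have : ω * (x - a) ≤ ω * (b - a) := by gcongr; exact hx.2
      simp only [θ, δ]
      linarith
  have := (((hasDerivAt_cos _).comp x (hθ x)).const_mul ω).div ((hasDerivAt_sin _).comp x (hθ x))
    hsin
  refine this.congr_deriv ?_
  simp only [Function.comp_apply]
  field_simp
  ring

theorem sq_pi_div_mul_integral_sq_le_integral_sq_deriv {f f' : ℝ → ℝ} {a b : ℝ} (hab : a < b)
    (hf : ∀ x ∈ Icc a b, HasDerivAt f (f' x) x) (hf' : ContinuousOn f' (Icc a b))
    (ha : f a = 0) (hb : f b = 0) :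
    (π / (b - a)) ^ 2 * ∫ x in a..b, f x ^ 2 ≤ ∫ x in a..b, f' x ^ 2 := by
  have hω₀ : 0 < π / (b - a) := div_pos pi_pos (sub_pos.2 hab)
  have hlt : ∀ ω ∈ Ioo 0 (π / (b - a)), ω ^ 2 * ∫ x in a..b, f x ^ 2 ≤ ∫ x in a..b, f' x ^ 2 := by
    rintro ω ⟨hω, hωlt⟩
    obtain ⟨q, hq⟩ := exists_riccati_solution_Icc hω ((lt_div_iff₀ (sub_pos.2 hab)).1 hωlt)
    exact sq_mul_integral_sq_le_of_riccati hab.le hf hf' hq ha hb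
  have hcont : Tendsto (fun ω : ℝ => ω ^ 2 * ∫ x in a..b, f x ^ 2) (𝓝[<] (π / (b - a)))
      (𝓝 ((π / (b - a)) ^ 2 * ∫ x in a..b, f x ^ 2)) :=
    ((continuous_pow 2).mul continuous_const).continuousAt.tendsto.mono_left nhdsWithin_le_nhds
  exact le_of_tendsto hcont (eventually_of_mem (Ioo_mem_nhdsLT hω₀) hlt)

theorem AbsolutelyContinuousOnInterval.of_hasDerivAt_of_continuousOn {f f' : ℝ → ℝ} {a b : ℝ}
    (hf : ∀ x ∈ uIcc a b, HasDerivAt f (f' x) x) (hf' : ContinuousOn f' (uIcc a b)) :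
    AbsolutelyContinuousOnInterval f a b := by
  obtain ⟨C, hC⟩ := isCompact_uIcc.exists_bound_of_continuousOn hf'
  refine LipschitzOnWith.absolutelyContinuousOnInterval (K := C.toNNReal) ?_
  refine convex_uIcc a b |>.lipschitzOnWith_of_nnnorm_hasDerivWithin_le
    (fun x hx => (hf x hx).hasDerivWithinAt) fun x hx => ?_
  rw [← NNReal.coe_le_coe, coe_nnnorm]
  exact (hC x hx).trans (le_coe_toNNReal C)

theorem integral_sq_deriv_eq_integral_sq_sub_integral_mul_jacobi {f f' : ℝ → ℝ} {a b : ℝ}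
    (hf : ∀ x ∈ uIcc a b, HasDerivAt f (f' x) x) (hf' : AbsolutelyContinuousOnInterval f' a b)
    (ha : f a = 0) (hb : f b = 0) :
    ∫ x in a..b, f' x ^ 2
      = (∫ x in a..b, f x ^ 2) - ∫ x in a..b, f x * (deriv f' x + f x) := by
  have hfc : ContinuousOn f (uIcc a b) := fun x hx => (hf x hx).continuousAt.continuousWithinAt
  have hfac : AbsolutelyContinuousOnInterval f a b :=
    .of_hasDerivAt_of_continuousOn hf hf'.continuousOn
  have hibp : ∫ x in a..b, f' x ^ 2 = -∫ x in a..b, f x * deriv f' x := by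
    rw [hfac.integral_mul_deriv_eq_deriv_mul hf', ha, hb, zero_mul, zero_mul, sub_zero, zero_sub,
      neg_neg]
    refine intervalIntegral.integral_congr fun x hx => ?_
    simp only [(hf x hx).deriv, sq]
  simp only [hibp, mul_add, ← sq]
  have hf2 : IntervalIntegrable (fun x => f x ^ 2) volume a b := (hfc.pow 2).intervalIntegrable
  rw [intervalIntegral.integral_add (hf'.intervalIntegrable_deriv.continuousOn_mul hfc) hf2]
  ring

theorem integral_sq_le_of_jacobi_dirichlet {f f' : ℝ → ℝ} {a b l : ℝ} (hab : a < b)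
    (hl : b - a ≤ l) (hlπ : l < π) (hf : ∀ x ∈ Icc a b, HasDerivAt f (f' x) x)
    (hf' : AbsolutelyContinuousOnInterval f' a b)
    (hg : IntervalIntegrable (fun x => (deriv f' x + f x) ^ 2) volume a b)
    (ha : f a = 0) (hb : f b = 0) :
    ∫ x in a..b, f x ^ 2 ≤ 1 / ((π / l) ^ 2 - 1) ^ 2 * ∫ x in a..b, (deriv f' x + f x) ^ 2 := by
  have hf'c : ContinuousOn f' (Icc a b) := uIcc_of_le hab.le ▸ hf'.continuousOn
  have hfc : ContinuousOn f (Icc a b) := fun x hx => (hf x hx).continuousAt.continuousWithinAt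
  have hwirt := sq_pi_div_mul_integral_sq_le_integral_sq_deriv hab hf hf'c ha hb
  rw [integral_sq_deriv_eq_integral_sq_sub_integral_mul_jacobi (uIcc_of_le hab.le ▸ hf) hf' ha hb]
    at hwirt
  have hcs : (∫ x in a..b, f x * (deriv f' x + f x)) ^ 2
      ≤ (∫ x in a..b, f x ^ 2) * ∫ x in a..b, (deriv f' x + f x) ^ 2 := by
    rw [← uIcc_of_le hab.le] at hfc
    simpa only [intervalIntegral.integral_of_le hab.le] using
      integral_mul_sq_le_integral_sq_mul_integral_sq (hfc.pow 2).intervalIntegrable.1 hg.1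
        ((hf'.intervalIntegrable_deriv.add hfc.intervalIntegrable).continuousOn_mul hfc).1
  set P := ∫ x in a..b, f x ^ 2
  set Q := ∫ x in a..b, (deriv f' x + f x) ^ 2
  set J := ∫ x in a..b, f x * (deriv f' x + f x)
  have hP : 0 ≤ P := intervalIntegral.integral_nonneg hab.le fun x _ => sq_nonneg _
  have hQ : 0 ≤ Q := intervalIntegral.integral_nonneg hab.le fun x _ => sq_nonneg _
  have hl0 : 0 < l := (sub_pos.2 hab).trans_le hl
  have hκ : 0 < (π / l) ^ 2 - 1 := by
    have : 1 < π / l := (one_lt_div hl0).2 hlπ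
    nlinarith
  have hκP : ((π / l) ^ 2 - 1) * P ≤ -J := calc
    ((π / l) ^ 2 - 1) * P ≤ ((π / (b - a)) ^ 2 - 1) * P := by gcongr
    _ ≤ -J := by linarith
  rw [one_div, ← div_eq_inv_mul, le_div_iff₀ (by positivity)]
  rcases hP.eq_or_lt with hP0 | hP0
  · simpa [← hP0] using hQ
  · have : (((π / l) ^ 2 - 1) * P) ^ 2 ≤ J ^ 2 := by nlinarith [mul_nonneg hκ.le hP]
    nlinarith

theorem hasDerivAt_sinusoid (A B r s : ℝ) :
    HasDerivAt (fun s => A * cos (s - r) + B * sin (s - r))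
      (B * cos (s - r) + -A * sin (s - r)) s := by
  have hs : HasDerivAt (fun s : ℝ => s - r) 1 s := (hasDerivAt_id s).sub_const r
  exact ((((hasDerivAt_cos _).comp s hs).const_mul A).add
    (((hasDerivAt_sin _).comp s hs).const_mul B)).congr_deriv (by ring)

theorem LipschitzWith.intervalIntegrable_sq_deriv_add {g u : ℝ → ℝ} {K : NNReal}
    (hg : LipschitzWith K g) (hu : Continuous u) (a b : ℝ) :
    IntervalIntegrable (fun x => (deriv g x + u x) ^ 2) volume a b := by
  refine IntervalIntegrable.mono_fun' (g := fun x => (K + |u x|) ^ 2)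
    (((continuous_const.add hu.abs).pow 2).intervalIntegrable a b)
    (((measurable_deriv g).add hu.measurable).pow_const 2).aestronglyMeasurable
    (ae_of_all _ fun x => ?_)
  have : |deriv g x + u x| ≤ K + |u x| :=
    (abs_add_le _ _).trans (add_le_add_left (norm_deriv_le_of_lipschitz hg) _)
  dsimp only
  rw [norm_pow, norm_eq_abs]
  exact pow_le_pow_left₀ (abs_nonneg _) this 2

theorem stmt7 (r L l0 : ℝ) (u u' : ℝ → ℝ) (hrL : r < L)
    (hlen : L - r ≤ l0) (hl0 : l0 < Real.pi)
    (hderiv : ∀ s, HasDerivAt u (u' s) s)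
    (K : NNReal) (hlip : LipschitzWith K u') :
    ∫ s in r..L,
        (u s - (u r * Real.cos (s - r) +
          (u L - u r * Real.cos (L - r)) / Real.sin (L - r) * Real.sin (s - r))) ^ 2
      ≤ 1 / ((Real.pi / l0) ^ 2 - 1) ^ 2 * ∫ s in r..L, (deriv u' s + u s) ^ 2 := by
  set B := (u L - u r * cos (L - r)) / sin (L - r)
  set y := fun s => u r * cos (s - r) + B * sin (s - r)
  set y' := fun s => B * cos (s - r) + -u r * sin (s - r)
  have hy'' : ∀ s, HasDerivAt y' (-y s) s := fun s =>
    (hasDerivAt_sinusoid B (-u r) r s).congr_deriv (by ring)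
  have hsin : sin (L - r) ≠ 0 := (sin_pos_of_pos_of_lt_pi (sub_pos.2 hrL) (by linarith)).ne'
  have hjacobi : (fun s => (deriv (fun s => u' s - y' s) s + (u s - y s)) ^ 2)
      =ᵐ[volume] fun s => (deriv u' s + u s) ^ 2 := by
    filter_upwards [hlip.ae_differentiableAt_real] with s hs
    rw [(hs.hasDerivAt.fun_sub (hy'' s)).deriv]
    ring
  have hu : Continuous u := continuous_iff_continuousAt.2 fun s => (hderiv s).continuousAt
  have key := integral_sq_le_of_jacobi_dirichlet
    (f := fun s => u s - y s) (f' := fun s => u' s - y' s) hrL hlen hl0 (fun s _ => (hderiv s).sub (hasDerivAt_sinusoid _ _ r s))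
    (hlip.lipschitzOnWith.absolutelyContinuousOnInterval.sub
      (by fun_prop : ContDiff ℝ 1 y').contDiffOn.absolutelyContinuousOnInterval)
    ((hlip.intervalIntegrable_sq_deriv_add hu r L).congr_ae (ae_restrict_of_ae hjacobi.symm))
    (by simp [y]) (by simp only [y, B]; field_simp; ring)
  rw [intervalIntegral.integral_congr_ae (hjacobi.mono fun s hs _ => hs)] at key
  exact key
end

section
/- Let $0 < \theta < 1$, $\pi/2 < l \le \pi$ with $l(1-\theta) > \pi/2$. Then $\int_\theta^{l(1-\theta)} \sin^2 t\, dt + \int_\theta^{l - \pi/2} \cot^2(\pi - l + t)\sin^2 t\, dt + \int_{\pi/2}^{l(1-\theta)} \cos^2 t\, dt \le \pi$, and as $\theta \to 0^+$, $l \to \pi^-$ (with $l \ge \pi - \varphi(\theta)$ for suitable $\varphi(\theta) \to 0$), the left-hand side converges to $\int_0^\pi (\sin^2 t + \cos^2 t)\, dt = \pi$. -/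
open Filter Set Real Topology intervalIntegral

/-!
Each integral is compared with the same integrand over a fixed interval. After the shift
`s = π - l + t` the middle integrand is squeezed between `cos s ^ 2 - 2 (π - l) / sin θ` and
`cos s ^ 2`, because `sin t ≤ sin s ≤ sin t + (π - l)`. Hence `J₂ θ l` is at most
`∫₀^π sin² + ∫₀^{π/2} cos² + ∫_{π/2}^π cos² = π`, and it falls short of `π` by the lengths of the
missing end intervals plus `π (π - l) / sin θ`, which is `O(θ)` once `π - l ≤ θ ^ 2`
(by Jordan's inequality `sin θ ≥ 2θ / π`).
-/

noncomputable def J₂ (θ l : ℝ) : ℝ :=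
  (∫ t in θ..(l * (1 - θ)), sin t ^ 2) +
    (∫ t in θ..(l - π / 2), cot (π - l + t) ^ 2 * sin t ^ 2) +
    (∫ t in (π / 2)..(l * (1 - θ)), cos t ^ 2)

lemma integral_le_of_le_one {f : ℝ → ℝ} (hf : Continuous f) (hf1 : ∀ x, f x ≤ 1) {a b : ℝ}
    (hab : a ≤ b) : ∫ x in a..b, f x ≤ b - a := by
  calc ∫ x in a..b, f x ≤ ∫ _ in a..b, (1 : ℝ) :=
        integral_mono_on hab (hf.intervalIntegrable _ _) intervalIntegrable_const fun x _ => hf1 x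
    _ = b - a := by simp

lemma integral_subinterval_bounds {f : ℝ → ℝ} (hf : Continuous f) (hf0 : ∀ x, 0 ≤ f x)
    (hf1 : ∀ x, f x ≤ 1) {a b c d : ℝ} (hca : c ≤ a) (hab : a ≤ b) (hbd : b ≤ d) :
    (∫ x in c..d, f x) - ((a - c) + (d - b)) ≤ ∫ x in a..b, f x ∧
      ∫ x in a..b, f x ≤ ∫ x in c..d, f x := by
  refine ⟨?_, integral_mono_interval hca hab hbd (.of_forall hf0) (hf.intervalIntegrable _ _)⟩
  rw [← integral_add_adjacent_intervals (hf.intervalIntegrable c a) (hf.intervalIntegrable a d),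
    ← integral_add_adjacent_intervals (hf.intervalIntegrable a b) (hf.intervalIntegrable b d)]
  linarith [integral_le_of_le_one hf hf1 hca, integral_le_of_le_one hf hf1 hbd]

lemma integral_sin_sq_zero_pi : ∫ x in (0)..π, sin x ^ 2 = π / 2 := by
  simp [integral_sin_sq]

lemma integral_cos_sq_zero_pi_div_two : ∫ x in (0)..(π / 2), cos x ^ 2 = π / 4 := by
  simp [integral_cos_sq]; ring

lemma integral_cos_sq_pi_div_two_pi : ∫ x in (π / 2)..π, cos x ^ 2 = π / 4 := by
  simp [integral_cos_sq]; ring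

lemma cot_sq_mul_sin_sq_le {x y : ℝ} (h : |sin y| ≤ |sin x|) :
    cot x ^ 2 * sin y ^ 2 ≤ cos x ^ 2 := by
  rw [cot_eq_cos_div_sin, div_pow]
  rcases eq_or_ne (sin x) 0 with h0 | h0
  · simp [h0, sq_nonneg]
  rw [div_mul_eq_mul_div, div_le_iff₀ (by positivity)]
  exact mul_le_mul_of_nonneg_left (sq_le_sq.mpr h) (sq_nonneg _)

lemma cos_sq_sub_le_cot_sq_mul_sin_sq {x y : ℝ} (hx : 0 < sin x) (hyx : sin y ≤ sin x) :
    cos x ^ 2 - 2 * (sin x - sin y) / sin x ≤ cot x ^ 2 * sin y ^ 2 := by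
  have hcot : cot x ^ 2 * sin y ^ 2 = cos x ^ 2 * (sin y / sin x) ^ 2 := by
    rw [cot_eq_cos_div_sin]; ring
  have hdiff : 2 * (sin x - sin y) / sin x = 2 * (1 - sin y / sin x) := by
    field_simp
  have hr1 : sin y / sin x ≤ 1 := (div_le_one hx).mpr hyx
  rw [hcot, hdiff]
  generalize sin y / sin x = r at hr1 ⊢
  -- `cos x ^ 2 * (1 - r ^ 2) ≤ 1 - r ^ 2 ≤ 2 * (1 - r)`, the last step being `(1 - r) ^ 2 ≥ 0`
  nlinarith [cos_sq_le_one x, sq_nonneg (1 - r), mul_nonneg (sq_nonneg (cos x))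
    (sub_nonneg.mpr hr1)]

lemma cot_sq_mul_sin_sq_bounds {θ δ t : ℝ} (hθ : 0 < θ) (hδ : 0 ≤ δ)
    (ht : t ∈ Icc θ (π / 2 - δ)) :
    0 < sin (δ + t) ∧ cos (δ + t) ^ 2 - 2 * δ / sin θ ≤ cot (δ + t) ^ 2 * sin t ^ 2 ∧
      cot (δ + t) ^ 2 * sin t ^ 2 ≤ cos (δ + t) ^ 2 := by
  obtain ⟨hθt, htδ⟩ := ht
  have hsθ : 0 < sin θ := sin_pos_of_pos_of_lt_pi hθ (by linarith [pi_pos])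
  have hsθt : sin θ ≤ sin t := sin_le_sin_of_le_of_le_pi_div_two (by linarith) (by linarith) hθt
  have hst : sin t ≤ sin (δ + t) :=
    sin_le_sin_of_le_of_le_pi_div_two (by linarith) (by linarith) (by linarith)
  have hlip : sin (δ + t) - sin t ≤ δ := by
    have := abs_sin_sub_sin_le (δ + t) t
    rw [add_sub_cancel_right, abs_of_nonneg hδ] at this
    exact (le_abs_self _).trans this
  refine ⟨by linarith, ?_, cot_sq_mul_sin_sq_le ?_⟩
  · calc cos (δ + t) ^ 2 - 2 * δ / sin θ
        ≤ cos (δ + t) ^ 2 - 2 * (sin (δ + t) - sin t) / sin (δ + t) := by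
          gcongr ?_ - ?_
          exact div_le_div₀ (by linarith) (by linarith) hsθ (by linarith)
      _ ≤ cot (δ + t) ^ 2 * sin t ^ 2 := cos_sq_sub_le_cot_sq_mul_sin_sq (by linarith) hst
  · rw [abs_of_nonneg, abs_of_nonneg] <;> linarith

lemma integral_cot_sq_mul_sin_sq_bounds {θ δ : ℝ} (hθ : 0 < θ) (hδ : 0 ≤ δ)
    (hθδ : θ + δ ≤ π / 2) :
    (∫ t in (θ + δ)..(π / 2), cos t ^ 2) - π * δ / sin θ ≤
        ∫ t in θ..(π / 2 - δ), cot (δ + t) ^ 2 * sin t ^ 2 ∧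
      ∫ t in θ..(π / 2 - δ), cot (δ + t) ^ 2 * sin t ^ 2 ≤ ∫ t in (θ + δ)..(π / 2), cos t ^ 2 := by
  have hle : θ ≤ π / 2 - δ := by linarith
  have hshift : ∫ t in θ..(π / 2 - δ), cos (δ + t) ^ 2 = ∫ t in (θ + δ)..(π / 2), cos t ^ 2 := by
    rw [integral_comp_add_left (fun t => cos t ^ 2)]
    congr 1 <;> ring
  have hcos : Continuous fun t => cos (δ + t) ^ 2 := by fun_prop
  have hcont : ContinuousOn (fun t => cot (δ + t) ^ 2 * sin t ^ 2) (uIcc θ (π / 2 - δ)) := by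
    rw [uIcc_of_le hle]
    simp only [cot_eq_cos_div_sin]
    exact ((ContinuousOn.div (by fun_prop) (by fun_prop) fun t ht =>
      (cot_sq_mul_sin_sq_bounds hθ hδ ht).1.ne').pow 2).mul (by fun_prop)
  have hslope : 0 ≤ 2 * δ / sin θ :=
    div_nonneg (by linarith) (sin_pos_of_pos_of_lt_pi hθ (by linarith [pi_pos])).le
  constructor
  · calc (∫ t in (θ + δ)..(π / 2), cos t ^ 2) - π * δ / sin θ
        ≤ (∫ t in (θ + δ)..(π / 2), cos t ^ 2) - (π / 2 - δ - θ) * (2 * δ / sin θ) := by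
          rw [show π * δ / sin θ = π / 2 * (2 * δ / sin θ) by ring]
          gcongr ?_ - ?_
          exact mul_le_mul_of_nonneg_right (by linarith) hslope
      _ = ∫ t in θ..(π / 2 - δ), (cos (δ + t) ^ 2 - 2 * δ / sin θ) := by
          rw [integral_sub (hcos.intervalIntegrable _ _) intervalIntegrable_const,
            integral_const, hshift, smul_eq_mul]
      _ ≤ ∫ t in θ..(π / 2 - δ), cot (δ + t) ^ 2 * sin t ^ 2 :=
          integral_mono_on hle ((hcos.sub continuous_const).intervalIntegrable _ _)
            hcont.intervalIntegrable fun t ht => (cot_sq_mul_sin_sq_bounds hθ hδ ht).2.1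
  · rw [← hshift]
    exact integral_mono_on hle hcont.intervalIntegrable (hcos.intervalIntegrable _ _)
      fun t ht => (cot_sq_mul_sin_sq_bounds hθ hδ ht).2.2

lemma J₂_bounds {θ l : ℝ} (hθ : 0 < θ) (hl2 : π / 2 < l) (hlπ : l ≤ π)
    (hu : π / 2 < l * (1 - θ)) :
    π - (2 * θ + 2 * (π - l * (1 - θ)) + (π - l) + π * (π - l) / sin θ) ≤ J₂ θ l ∧
      J₂ θ l ≤ π := by
  have hθδ : θ + (π - l) ≤ π / 2 := by
    nlinarith [pi_gt_three, mul_pos hθ (sub_pos.2 hl2)]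
  have huπ : l * (1 - θ) ≤ π := by nlinarith
  have hsin : Continuous fun t => sin t ^ 2 := by fun_prop
  have hcos : Continuous fun t => cos t ^ 2 := by fun_prop
  obtain ⟨hA₁, hA₂⟩ := integral_subinterval_bounds hsin (fun _ => sq_nonneg _) sin_sq_le_one
    hθ.le (by linarith) huπ
  obtain ⟨hC₁, hC₂⟩ := integral_subinterval_bounds hcos (fun _ => sq_nonneg _) cos_sq_le_one
    le_rfl hu.le huπ
  obtain ⟨hI₁, hI₂⟩ := integral_subinterval_bounds hcos (fun _ => sq_nonneg _) cos_sq_le_one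
    (by linarith : (0 : ℝ) ≤ θ + (π - l)) hθδ le_rfl
  obtain ⟨hM₁, hM₂⟩ := integral_cot_sq_mul_sin_sq_bounds hθ (sub_nonneg.2 hlπ) hθδ
  rw [integral_sin_sq_zero_pi] at hA₁ hA₂
  rw [integral_cos_sq_pi_div_two_pi] at hC₁ hC₂
  rw [integral_cos_sq_zero_pi_div_two] at hI₁ hI₂
  rw [J₂, show l - π / 2 = π / 2 - (π - l) by ring]
  constructor <;> linarith

lemma abs_J₂_sub_pi_le {θ l : ℝ} (hθ : 0 < θ) (hθ1 : θ ≤ 1) (hl : π - θ ^ 2 ≤ l)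
    (hl2 : π / 2 < l) (hlπ : l ≤ π) (hu : π / 2 < l * (1 - θ)) :
    |J₂ θ l - π| ≤ 25 * θ := by
  obtain ⟨hlow, hup⟩ := J₂_bounds hθ hl2 hlπ hu
  have hpi := pi_le_four
  have hjordan : 2 / π * θ ≤ sin θ := mul_le_sin hθ.le (by linarith [pi_gt_three])
  have hcot : π * (π - l) / sin θ ≤ 8 * θ :=
    calc π * (π - l) / sin θ ≤ π * θ ^ 2 / (2 / π * θ) :=
          div_le_div₀ (by positivity) (by gcongr; linarith) (by positivity) hjordan
      _ = π ^ 2 / 2 * θ := by field_simp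
      _ ≤ 8 * θ := by gcongr; nlinarith [pi_pos]
  have hθsq : θ ^ 2 ≤ θ := by nlinarith
  have hlθ : l * θ ≤ 4 * θ := mul_le_mul_of_nonneg_right (hlπ.trans hpi) hθ.le
  rw [abs_le]
  constructor <;> linarith

theorem stmt15 :
    (∀ θ l : ℝ, 0 < θ → θ < 1 → Real.pi / 2 < l → l ≤ Real.pi →
      Real.pi / 2 < l * (1 - θ) →
      (∫ t in θ..(l * (1 - θ)), Real.sin t ^ 2) +
        (∫ t in θ..(l - Real.pi / 2), Real.cot (Real.pi - l + t) ^ 2 * Real.sin t ^ 2) +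
        (∫ t in (Real.pi / 2)..(l * (1 - θ)), Real.cos t ^ 2) ≤ Real.pi) ∧
    ∃ φ : ℝ → ℝ, (∀ θ : ℝ, 0 < θ → 0 < φ θ) ∧
      Filter.Tendsto φ (𝓝[>] 0) (𝓝 0) ∧
      ∀ ε > (0:ℝ), ∃ θ0 > (0:ℝ), ∀ θ : ℝ, 0 < θ → θ < θ0 →
        ∀ l : ℝ, Real.pi - φ θ ≤ l → l ≤ Real.pi → Real.pi / 2 < l →
          Real.pi / 2 < l * (1 - θ) →
          |(∫ t in θ..(l * (1 - θ)), Real.sin t ^ 2) +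
            (∫ t in θ..(l - Real.pi / 2), Real.cot (Real.pi - l + t) ^ 2 * Real.sin t ^ 2) +
            (∫ t in (Real.pi / 2)..(l * (1 - θ)), Real.cos t ^ 2) - Real.pi| < ε := by
  refine ⟨fun θ l hθ _ hl2 hlπ hu => (J₂_bounds hθ hl2 hlπ hu).2, fun θ => θ ^ 2,
    fun θ hθ => by positivity, ?_, fun ε hε => ⟨min (ε / 25) 1, by positivity, ?_⟩⟩
  · simpa using ((continuous_pow 2).tendsto (0 : ℝ)).mono_left nhdsWithin_le_nhds
  · intro θ hθ hθ0 l hl hlπ hl2 hu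
    calc |J₂ θ l - π|
        ≤ 25 * θ := abs_J₂_sub_pi_le hθ (hθ0.trans_le (min_le_right _ _)).le hl hl2 hlπ hu
      _ < ε := by linarith [hθ0.trans_le (min_le_left _ _)]
end
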